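/- arXiv:1207.3597 — 3 statements merged into one kernel-verified Lean document; each statement's English description precedes it below -/
import Mathlib

section
/- For any externally distributed Petri net N there is a distributed Petri net N′ such that N′ and N are step readiness equivalent (N′ ≈R N). -/
open scoped Classical

/-- A labelled Petri net over the set `A` of visible actions (a transition labelled
`none` is a τ-(internal) transition), with places drawn from the universe `P` and
transitions drawn from the universe `Tr`.  `pre t p` is the arc weight `F(p,t)` and
`post t p` is the arc weight `F(t,p)`. -/
structure PNet (P Tr A : Type) where
  places : Set P
  trans : Set Tr
  pre : Tr → P → ℕ
  post : Tr → P → ℕ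
  M0 : P → ℕ
  l : Tr → Option A
  pre_wf : ∀ t p, pre t p ≠ 0 → t ∈ trans ∧ p ∈ places
  post_wf : ∀ t p, post t p ≠ 0 → t ∈ trans ∧ p ∈ places
  M0_wf : ∀ p, M0 p ≠ 0 → p ∈ places

namespace PNet

variable {P Tr A : Type}

/-- `•G`, for a finite multiset `G` of transitions. -/
def preStep (N : PNet P Tr A) (G : Tr →₀ ℕ) : P → ℕ :=
  fun p => G.sum fun t n => n * N.pre t p

/-- `G•`, for a finite multiset `G` of transitions. -/
def postStep (N : PNet P Tr A) (G : Tr →₀ ℕ) : P → ℕ :=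
  fun p => G.sum fun t n => n * N.post t p

/-- `M [G⟩ M'` : the (nonempty, finite) multiset `G` of transitions is a step from
`M` to `M'`. -/
def IsStep (N : PNet P Tr A) (M : P → ℕ) (G : Tr →₀ ℕ) (M' : P → ℕ) : Prop :=
  G ≠ 0 ∧ ↑G.support ⊆ N.trans ∧ (∀ p, N.preStep G p ≤ M p) ∧
    ∀ p, M' p = M p - N.preStep G p + N.postStep G p

/-- `[M0⟩` : the set of reachable markings. -/
inductive Reachable (N : PNet P Tr A) : (P → ℕ) → Prop
  | refl : Reachable N N.M0
  | step {M G M'} : Reachable N M → N.IsStep M G M' → Reachable N M'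

/-- The transition `t` is enabled under the marking `M`. -/
def enabled (N : PNet P Tr A) (M : P → ℕ) (t : Tr) : Prop :=
  t ∈ N.trans ∧ ∀ p, N.pre t p ≤ M p

/-- The concurrency relation `t ⌣ u`. -/
def Conc (N : PNet P Tr A) (t u : Tr) : Prop :=
  t ∈ N.trans ∧ u ∈ N.trans ∧ ∃ M, N.Reachable M ∧ ∀ p, N.pre t p + N.pre u p ≤ M p

/-- Firing of a single transition: `M [\{t\}⟩ M'`. -/
def fire (N : PNet P Tr A) (M : P → ℕ) (t : Tr) (M' : P → ℕ) : Prop :=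
  N.enabled M t ∧ ∀ p, M' p = M p - N.pre t p + N.post t p

/-- `M —τ→ M'`. -/
def tauFire (N : PNet P Tr A) (M M' : P → ℕ) : Prop :=
  ∃ t, N.l t = none ∧ N.fire M t M'

/-- `M —a→ M'` for a visible action `a`. -/
def visFire (N : PNet P Tr A) (a : A) (M M' : P → ℕ) : Prop :=
  ∃ t, N.l t = some a ∧ N.fire M t M'

/-- `M ⟹ M'` : the reflexive-transitive closure of `—τ→`. -/
def Taus (N : PNet P Tr A) : (P → ℕ) → (P → ℕ) → Prop :=
  Relation.ReflTransGen N.tauFire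

/-- `M ⟹σ⟹ M'` for a sequence `σ` of visible actions. -/
def seqReach (N : PNet P Tr A) : List A → (P → ℕ) → (P → ℕ) → Prop
  | [], M, M' => N.Taus M M'
  | a :: σ, M, M'' => ∃ M1 M2, N.Taus M M1 ∧ N.visFire a M1 M2 ∧ N.seqReach σ M2 M''

/-- `ℓ(G)(a)` : the number of occurrences of the visible action `a` in the finite
multiset `G` of transitions. -/
noncomputable def labCount (N : PNet P Tr A) (G : Tr →₀ ℕ) (a : A) : ℕ :=
  ∑ t ∈ G.support, if N.l t = some a then G t else 0

/-- `ℓ(G)(a)` for a finite signed multiset `G` of transitions. -/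
noncomputable def labCountZ (N : PNet P Tr A) (G : Tr →₀ ℤ) (a : A) : ℤ :=
  ∑ t ∈ G.support, if N.l t = some a then G t else 0

/-- `ℓ(G) ≡ ∅` : the signed multiset `G` contains no visible actions. -/
def SilentZ (N : PNet P Tr A) (G : Tr →₀ ℤ) : Prop := ∀ a, N.labCountZ G a = 0

/-- The token replacement `⟦G⟧ = G• − •G` of a finite signed multiset of transitions. -/
noncomputable def tok (N : PNet P Tr A) (G : Tr →₀ ℤ) : P → ℤ :=
  fun p => ∑ t ∈ G.support, G t * ((N.post t p : ℤ) - (N.pre t p : ℤ))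

/-- The token replacement `⟦G⟧ = G• − •G` of a finite multiset of transitions. -/
noncomputable def tokN (N : PNet P Tr A) (G : Tr →₀ ℕ) : P → ℤ :=
  fun p => ∑ t ∈ G.support, (G t : ℤ) * ((N.post t p : ℤ) - (N.pre t p : ℤ))

/-- `M —X→` : a step with multiset of visible labels `X ∈ ℕ^Act` is enabled in `M`. -/
def stepTo (N : PNet P Tr A) (M : P → ℕ) (X : A → ℕ) : Prop :=
  ∃ G : Tr →₀ ℕ, G ≠ 0 ∧ ↑G.support ⊆ N.trans ∧ (∀ t ∈ G.support, N.l t ≠ none) ∧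
    (∀ p, N.preStep G p ≤ M p) ∧ ∀ a, N.labCount G a = X a

/-- `⟨σ, X⟩` is a step ready pair of `N`. -/
def StepReadyPair (N : PNet P Tr A) (σ : List A) (X : Set (A → ℕ)) : Prop :=
  ∃ M, N.seqReach σ N.M0 M ∧ (∀ M', ¬ N.tauFire M M') ∧ X = {Y | N.stepTo M Y}

/-- A net is plain iff its labelling is injective and no transition is labelled τ. -/
def Plain (N : PNet P Tr A) : Prop :=
  (∀ t ∈ N.trans, N.l t ≠ none) ∧
    ∀ t ∈ N.trans, ∀ u ∈ N.trans, N.l t = N.l u → t = u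

/-- A structural conflict net: concurrent transitions have no common preplace. -/
def StructuralConflict (N : PNet P Tr A) : Prop :=
  ∀ t u, N.Conc t u → ∀ p, N.pre t p = 0 ∨ N.pre u p = 0

/-- A finitary net: every transition has a preplace, and every reachable marking is
finite and enables only finitely many transitions. -/
def Finitary (N : PNet P Tr A) : Prop :=
  (∀ t ∈ N.trans, ∃ p, N.pre t p ≠ 0) ∧
    ∀ M, N.Reachable M → {p | M p ≠ 0}.Finite ∧ {t | N.enabled M t}.Finite

/-- `N` has a fully reachable pure M. -/
def FullyReachablePureM (N : PNet P Tr A) : Prop :=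
  ∃ t u v : Tr, t ∈ N.trans ∧ u ∈ N.trans ∧ v ∈ N.trans ∧
    (∃ p, N.pre t p ≠ 0 ∧ N.pre u p ≠ 0) ∧
    (∃ p, N.pre u p ≠ 0 ∧ N.pre v p ≠ 0) ∧
    (∀ p, N.pre t p = 0 ∨ N.pre v p = 0) ∧
    ∃ M, N.Reachable M ∧ ∀ p, max (max (N.pre t p) (N.pre u p)) (N.pre v p) ≤ M p

/-- `N` is distributed w.r.t. the distribution `D`. -/
def DistributedWrt (N : PNet P Tr A) {Loc : Type} (D : P ⊕ Tr → Loc) : Prop :=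
  (∀ t p, N.pre t p ≠ 0 → D (Sum.inr t) = D (Sum.inl p)) ∧
    ∀ t u, N.Conc t u → D (Sum.inr t) ≠ D (Sum.inr u)

/-- `N` is a distributed net. -/
def Distributed (N : PNet P Tr A) : Prop :=
  ∃ (Loc : Type) (D : P ⊕ Tr → Loc), N.DistributedWrt D

/-- `N` is essentially distributed w.r.t. the distribution `D`. -/
def EssentiallyDistributedWrt (N : PNet P Tr A) {Loc : Type} (D : P ⊕ Tr → Loc) : Prop :=
  (∀ t p, N.pre t p ≠ 0 → D (Sum.inr t) = D (Sum.inl p)) ∧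
    ∀ t u, N.Conc t u → N.l t ≠ none → D (Sum.inr t) ≠ D (Sum.inr u)

def EssentiallyDistributed (N : PNet P Tr A) : Prop :=
  ∃ (Loc : Type) (D : P ⊕ Tr → Loc), N.EssentiallyDistributedWrt D

/-- `N` is externally distributed w.r.t. the distribution `D`. -/
def ExternallyDistributedWrt (N : PNet P Tr A) {Loc : Type} (D : P ⊕ Tr → Loc) : Prop :=
  (∀ t p, N.pre t p ≠ 0 → D (Sum.inr t) = D (Sum.inl p)) ∧
    ∀ t u, N.Conc t u → N.l t ≠ none → N.l u ≠ none → D (Sum.inr t) ≠ D (Sum.inr u)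

def ExternallyDistributed (N : PNet P Tr A) : Prop :=
  ∃ (Loc : Type) (D : P ⊕ Tr → Loc), N.ExternallyDistributedWrt D

/-- The generating relation of the canonical co-location relation: a transition is
co-located with each of its preplaces. -/
def canonGen (N : PNet P Tr A) : (P ⊕ Tr) → (P ⊕ Tr) → Prop :=
  fun x y => ∃ t p, x = Sum.inr t ∧ y = Sum.inl p ∧ N.pre t p ≠ 0

/-- The canonical co-location relation `≡_C`. -/
def canonRel (N : PNet P Tr A) : (P ⊕ Tr) → (P ⊕ Tr) → Prop :=
  Relation.EqvGen N.canonGen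

/-- The canonical distribution, mapping every net element to its `≡_C`-class. -/
def canonDist (N : PNet P Tr A) : (P ⊕ Tr) → Quot N.canonRel := Quot.mk _

/-- The flow relation `F` on `S ∪ T`. -/
def flow (N : PNet P Tr A) : P ⊕ Tr → P ⊕ Tr → ℕ
  | Sum.inl p, Sum.inr t => N.pre t p
  | Sum.inr t, Sum.inl p => N.post t p
  | _, _ => 0

/-- `F ↾ (S ∪ T⁺)` is acyclic. -/
def AcyclicOn (N : PNet P Tr A) (Tp : Set Tr) : Prop :=
  ∀ x : P ⊕ Tr, ¬ Relation.TransGen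
    (fun x y => N.flow x y ≠ 0 ∧ (∀ t, x = Sum.inr t → t ∈ Tp) ∧
      (∀ t, y = Sum.inr t → t ∈ Tp)) x x

/-- A path in `N`, as a nonempty alternating list of net elements. -/
def IsPathList (N : PNet P Tr A) (π : List (P ⊕ Tr)) : Prop :=
  π ≠ [] ∧ π.Chain' fun x y => N.flow x y ≠ 0

/-- The arc weight `F(π)` of a path `π`. -/
def pathWeight (N : PNet P Tr A) (π : List (P ⊕ Tr)) : ℕ :=
  ((π.zip π.tail).map fun q => N.flow q.1 q.2).prod

/-- A faithful place w.r.t. `T⁺` and `S⁺`, i.e. `|{s} ∩ S⁺| + ∑_{t ∈ T⁺} F(t,s) = 1`. -/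
def FaithfulPlace (N : PNet P Tr A) (Tp : Set Tr) (Sp : Set P) (s : P) : Prop :=
  (s ∈ Sp ∧ ∀ t ∈ Tp, N.post t s = 0) ∨
    (s ∉ Sp ∧ ∃ t ∈ Tp, N.post t s = 1 ∧ ∀ u ∈ Tp, u ≠ t → N.post u s = 0)

/-- A faithful path w.r.t. `T⁺` and `S⁺`: all nodes but the last are transitions
in `T⁺` or faithful places. -/
def FaithfulPath (N : PNet P Tr A) (Tp : Set Tr) (Sp : Set P) (π : List (P ⊕ Tr)) : Prop :=
  N.IsPathList π ∧ ∀ x ∈ π.dropLast,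
    (∃ t ∈ Tp, x = Sum.inr t) ∨ ∃ s, x = Sum.inl s ∧ N.FaithfulPlace Tp Sp s

/-- The multiset `*x` of faithful origins of a net element `x`, w.r.t. `T⁺` and `S⁺`. -/
noncomputable def faithOrig (N : PNet P Tr A) (Tp : Set Tr) (Sp : Set P) (x : P ⊕ Tr) :
    P → ℕ∞ :=
  fun s => sSup {w : ℕ∞ | ∃ π : List (P ⊕ Tr), s ∈ Sp ∧ N.FaithfulPath Tp Sp π ∧
    π.head? = some (Sum.inl s) ∧ π.getLast? = some x ∧ w = (N.pathWeight π : ℕ∞)}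

end PNet

/-- A labelled transition system over visible labels `L` (the invisible action τ is
represented by `none`). -/
structure LTS (St L : Type) where
  init : St
  tr : St → Option L → St → Prop

namespace LTS

variable {St L : Type}

/-- `⟹` : the reflexive-transitive closure of `—τ→`. -/
def Taus (Lt : LTS St L) : St → St → Prop :=
  Relation.ReflTransGen fun s s' => Lt.tr s none s'

/-- `s —(η)→ s'` : an `η`-transition that may stay put when `η = τ`. -/
def OptTr (Lt : LTS St L) (s : St) (η : Option L) (s' : St) : Prop :=
  Lt.tr s η s' ∨ (η = none ∧ s = s')

/-- The state `s` admits an infinite sequence of τ-transitions. -/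
def Diverges (Lt : LTS St L) (s : St) : Prop :=
  ∃ f : ℕ → St, f 0 = s ∧ ∀ n, Lt.tr (f n) none (f (n + 1))

def ReachableState (Lt : LTS St L) (s : St) : Prop :=
  Relation.ReflTransGen (fun x y => ∃ η, Lt.tr x η y) Lt.init s

/-- A deterministic LTS: no reachable state admits a τ-transition, and visible
transitions from reachable states are deterministic. -/
def Deterministic (Lt : LTS St L) : Prop :=
  ∀ s, Lt.ReachableState s →
    (∀ s', ¬ Lt.tr s none s') ∧
      ∀ a s' s'', Lt.tr s (some a) s' → Lt.tr s (some a) s'' → s' = s''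

end LTS

/-- `B` is a branching bisimulation between the two LTSs. -/
def IsBranchingBisim {St1 St2 L : Type} (L1 : LTS St1 L) (L2 : LTS St2 L)
    (B : St1 → St2 → Prop) : Prop :=
  B L1.init L2.init ∧
    (∀ s1 s2 η s1', B s1 s2 → L1.tr s1 η s1' →
      ∃ s2d s2', L2.Taus s2 s2d ∧ L2.OptTr s2d η s2' ∧ B s1 s2d ∧ B s1' s2') ∧
    ∀ s1 s2 η s2', B s1 s2 → L2.tr s2 η s2' →
      ∃ s1d s1', L1.Taus s1 s1d ∧ L1.OptTr s1d η s1' ∧ B s1d s2 ∧ B s1' s2'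

/-- The two LTSs are branching bisimilar. -/
def BranchingBisimilar {St1 St2 L : Type} (L1 : LTS St1 L) (L2 : LTS St2 L) : Prop :=
  ∃ B, IsBranchingBisim L1 L2 B

/-- The two LTSs are branching bisimilar with explicit divergence. -/
def BranchingBisimilarED {St1 St2 L : Type} (L1 : LTS St1 L) (L2 : LTS St2 L) : Prop :=
  ∃ B, IsBranchingBisim L1 L2 B ∧
    ∀ s1 s2, B s1 s2 → (L1.Diverges s1 ↔ L2.Diverges s2)

/-- The visible action phases `a⁺` and `a⁻ⁿ` (here `n` is the 0-based position of the
terminating transition in the sequence of transitions currently firing). -/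
inductive STLabel (A : Type) : Type
  | plus (a : A)
  | minus (a : A) (n : ℕ)

/-- The visible action phases `a⁺` and `a⁻` of split semantics. -/
inductive SplitLabel (A : Type) : Type
  | plus (a : A)
  | minus (a : A)

/-- The map `η ↦ η‾` from ST-action phases to split action phases. -/
def STLabel.bar {A : Type} : STLabel A → SplitLabel A
  | .plus a => .plus a
  | .minus a _ => .minus a

namespace PNet

variable {P Tr A : Type}

/-- The ST-transition relations between ST-markings. -/
def stTr (N : PNet P Tr A) :
    ((P → ℕ) × List Tr) → Option (STLabel A) → ((P → ℕ) × List Tr) → Prop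
  | s, some (STLabel.plus a), s' => ∃ t, N.l t = some a ∧ N.enabled s.1 t ∧
      (∀ p, s'.1 p = s.1 p - N.pre t p) ∧ s'.2 = s.2 ++ [t]
  | s, some (STLabel.minus a n), s' => ∃ t, s.2[n]? = some t ∧ N.l t = some a ∧
      s'.2 = s.2.eraseIdx n ∧ ∀ p, s'.1 p = s.1 p + N.post t p
  | s, none, s' => ∃ t, N.l t = none ∧ N.fire s.1 t s'.1 ∧ s'.2 = s.2

/-- The ST-LTS associated to a net. -/
def stLTS (N : PNet P Tr A) : LTS ((P → ℕ) × List Tr) (STLabel A) :=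
  ⟨(N.M0, []), N.stTr⟩

/-- The split transition relations between split markings. -/
def splitTr (N : PNet P Tr A) :
    ((P → ℕ) × Multiset Tr) → Option (SplitLabel A) → ((P → ℕ) × Multiset Tr) → Prop
  | s, some (SplitLabel.plus a), s' => ∃ t, N.l t = some a ∧ N.enabled s.1 t ∧
      (∀ p, s'.1 p = s.1 p - N.pre t p) ∧ s'.2 = s.2 + {t}
  | s, some (SplitLabel.minus a), s' => ∃ t, N.l t = some a ∧ s.2 = s'.2 + {t} ∧
      ∀ p, s'.1 p = s.1 p + N.post t p
  | s, none, s' => ∃ t, N.l t = none ∧ N.fire s.1 t s'.1 ∧ s'.2 = s.2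

/-- The split LTS associated to a net. -/
def splitLTS (N : PNet P Tr A) : LTS ((P → ℕ) × Multiset Tr) (SplitLabel A) :=
  ⟨(N.M0, 0), N.splitTr⟩

end PNet

/-- `N1 ≈Δ_bSTb N2` : branching ST-bisimilarity with explicit divergence. -/
def BranchingSTBisimilarED {P1 T1 P2 T2 A : Type}
    (N1 : PNet P1 T1 A) (N2 : PNet P2 T2 A) : Prop :=
  BranchingBisimilarED N1.stLTS N2.stLTS

/-- `N1 ≈R N2` : step readiness equivalence. -/
def StepReadinessEquiv {P1 T1 P2 T2 A : Type}
    (N1 : PNet P1 T1 A) (N2 : PNet P2 T2 A) : Prop :=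
  ∀ σ X, N1.StepReadyPair σ X ↔ N2.StepReadyPair σ X

/-- A component with interface `(I, O)`. -/
structure NetComponent (P Tr A : Type) where
  net : PNet P Tr A
  I : Set P
  O : Set P
  I_sub : I ⊆ net.places
  O_sub : O ⊆ net.places
  disjIO : Disjoint I O
  O_noPost : ∀ p ∈ O, ∀ t, net.pre t p = 0

/-- A sequential component with interface: some set `Q` of private places carries
exactly one token initially, and every transition consumes and produces exactly one
token in `Q`. -/
def NetComponent.Sequential {P Tr A : Type} (C : NetComponent P Tr A) : Prop :=
  ∃ Q : Set P, Q ⊆ C.net.places \ (C.I ∪ C.O) ∧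
    (∀ t ∈ C.net.trans,
      (∃ q ∈ Q, C.net.pre t q = 1 ∧ ∀ q' ∈ Q, q' ≠ q → C.net.pre t q' = 0) ∧
        ∃ q ∈ Q, C.net.post t q = 1 ∧ ∀ q' ∈ Q, q' ≠ q → C.net.post t q' = 0) ∧
    ∃ q ∈ Q, C.net.M0 q = 1 ∧ ∀ q' ∈ Q, q' ≠ q → C.net.M0 q' = 0

/-- The components of the family `C` are pairwise composable: disjoint except for
shared interface places, and with pairwise disjoint sets of input places. -/
def Composable {K P Tr A : Type} (C : K → NetComponent P Tr A) : Prop :=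
  (∀ k l, k ≠ l → Disjoint (C k).net.trans (C l).net.trans) ∧
    (∀ k l, k ≠ l →
      (C k).net.places ∩ (C l).net.places =
        ((C k).I ∪ (C k).O) ∩ ((C l).I ∪ (C l).O)) ∧
    ∀ k l, k ≠ l → Disjoint (C k).I (C l).I

/-- `D = ‖_{k ∈ K} C k` : `D` is the asynchronous parallel composition of the
family `C` of components. -/
structure IsParComp {K P Tr A : Type} (C : K → NetComponent P Tr A)
    (D : NetComponent P Tr A) : Prop where
  places_eq : D.net.places = ⋃ k, (C k).net.places
  trans_eq : D.net.trans = ⋃ k, (C k).net.trans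
  pre_eq : ∀ k, ∀ t ∈ (C k).net.trans, ∀ p, D.net.pre t p = (C k).net.pre t p
  post_eq : ∀ k, ∀ t ∈ (C k).net.trans, ∀ p, D.net.post t p = (C k).net.post t p
  M0_eq : ∀ p, D.net.M0 p = finsum fun k => (C k).net.M0 p
  l_eq : ∀ k, ∀ t ∈ (C k).net.trans, D.net.l t = (C k).net.l t
  I_eq : D.I = ⋃ k, (C k).I
  O_eq : D.O = (⋃ k, (C k).O) \ ⋃ k, (C k).I

/-- An LSGA net: an asynchronous parallel composition of sequential components
with interface. -/
def IsLSGA {P Tr A : Type} (N : PNet P Tr A) : Prop :=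
  ∃ (K : Type) (C : K → NetComponent P Tr A) (D : NetComponent P Tr A),
    Composable C ∧ (∀ k, (C k).Sequential) ∧ IsParComp C D ∧ D.net = N

namespace EDtoD

open PNet

variable {P Tr A Loc : Type}

/-- Augment `N` with one run place per location; each transition consumes and
produces one token on the run place of its location. -/
noncomputable def aug (N : PNet P Tr A) (D : P ⊕ Tr → Loc) : PNet (P ⊕ Loc) Tr A where
  places := (Sum.inl '' N.places) ∪ Set.range Sum.inr
  trans := N.trans
  pre t x := Sum.elim (N.pre t)
    (fun ℓ => if t ∈ N.trans ∧ D (Sum.inr t) = ℓ then 1 else 0) x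
  post t x := Sum.elim (N.post t)
    (fun ℓ => if t ∈ N.trans ∧ D (Sum.inr t) = ℓ then 1 else 0) x
  M0 x := Sum.elim N.M0 (fun _ => 1) x
  l := N.l
  pre_wf := by
    rintro t (p | ℓ) hne
    · exact ⟨(N.pre_wf t p hne).1, Or.inl ⟨p, (N.pre_wf t p hne).2, rfl⟩⟩
    · simp only [Sum.elim_inr] at hne
      split_ifs at hne with hc
      · exact ⟨hc.1, Or.inr ⟨ℓ, rfl⟩⟩
      · exact absurd rfl hne
  post_wf := by
    rintro t (p | ℓ) hne
    · exact ⟨(N.post_wf t p hne).1, Or.inl ⟨p, (N.post_wf t p hne).2, rfl⟩⟩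
    · simp only [Sum.elim_inr] at hne
      split_ifs at hne with hc
      · exact ⟨hc.1, Or.inr ⟨ℓ, rfl⟩⟩
      · exact absurd rfl hne
  M0_wf := by
    rintro (p | ℓ) hne
    · exact Or.inl ⟨p, N.M0_wf p hne, rfl⟩
    · exact Or.inr ⟨ℓ, rfl⟩

/-- Lift a marking of `N` to a marking of `aug N D`. -/
def liftM (M : P → ℕ) : (P ⊕ Loc) → ℕ := Sum.elim M fun _ => 1

lemma aug_pre_inr_le_one (N : PNet P Tr A) (D : P ⊕ Tr → Loc) (t : Tr) (ℓ : Loc) :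
    (aug N D).pre t (Sum.inr ℓ) ≤ 1 := by
  simp only [aug, Sum.elim_inr]
  split_ifs <;> omega

lemma fire_lift (N : PNet P Tr A) (D : P ⊕ Tr → Loc) {M : P → ℕ}
    {M'' : (P ⊕ Loc) → ℕ} {t : Tr} (h : (aug N D).fire (liftM M) t M'') :
    ∃ M2, M'' = liftM M2 ∧ N.fire M t M2 := by
  obtain ⟨⟨ht, hpre⟩, heq⟩ := h
  refine ⟨fun p => M p - N.pre t p + N.post t p, ?_, ⟨⟨ht, fun p => hpre (Sum.inl p)⟩,
    fun p => rfl⟩⟩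
  funext x
  rcases x with p | ℓ
  · exact heq (Sum.inl p)
  · have := heq (Sum.inr ℓ)
    simp only [aug, liftM, Sum.elim_inr] at this ⊢
    split_ifs at this <;> simpa using this

lemma lift_fire (N : PNet P Tr A) (D : P ⊕ Tr → Loc) {M M2 : P → ℕ} {t : Tr}
    (h : N.fire M t M2) : (aug N D).fire (liftM M) t (liftM M2) := by
  obtain ⟨⟨ht, hpre⟩, heq⟩ := h
  refine ⟨⟨ht, ?_⟩, ?_⟩
  · rintro (p | ℓ)
    · exact hpre p
    · exact aug_pre_inr_le_one N D t ℓ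
  · rintro (p | ℓ)
    · exact heq p
    · simp only [aug, liftM, Sum.elim_inr]
      split_ifs <;> rfl

lemma taus_lift (N : PNet P Tr A) (D : P ⊕ Tr → Loc) {M : P → ℕ}
    {M'' : (P ⊕ Loc) → ℕ} (h : (aug N D).Taus (liftM M) M'') :
    ∃ M2, M'' = liftM M2 ∧ N.Taus M M2 := by
  induction h with
  | refl => exact ⟨M, rfl, Relation.ReflTransGen.refl⟩
  | tail hab hbc ih =>
    obtain ⟨Mb, rfl, hMb⟩ := ih
    obtain ⟨t, hl, hf⟩ := hbc
    obtain ⟨Mc, rfl, hfc⟩ := fire_lift N D hf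
    exact ⟨Mc, rfl, hMb.tail ⟨t, hl, hfc⟩⟩

lemma lift_taus (N : PNet P Tr A) (D : P ⊕ Tr → Loc) {M M2 : P → ℕ}
    (h : N.Taus M M2) : (aug N D).Taus (liftM M) (liftM M2) := by
  induction h with
  | refl => exact Relation.ReflTransGen.refl
  | tail hab hbc ih =>
    obtain ⟨t, hl, hf⟩ := hbc
    exact ih.tail ⟨t, hl, lift_fire N D hf⟩

lemma seqReach_lift (N : PNet P Tr A) (D : P ⊕ Tr → Loc) {σ : List A} {M : P → ℕ}
    {M'' : (P ⊕ Loc) → ℕ} (h : (aug N D).seqReach σ (liftM M) M'') :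
    ∃ M2, M'' = liftM M2 ∧ N.seqReach σ M M2 := by
  induction σ generalizing M with
  | nil => exact taus_lift N D h
  | cons a σ ih =>
    obtain ⟨M1, M2, h1, ⟨t, hl, hf⟩, h3⟩ := h
    obtain ⟨Ma, rfl, hMa⟩ := taus_lift N D h1
    obtain ⟨Mb, rfl, hMb⟩ := fire_lift N D hf
    obtain ⟨Mc, rfl, hMc⟩ := ih h3
    exact ⟨Mc, rfl, Ma, Mb, hMa, ⟨t, hl, hMb⟩, hMc⟩

lemma lift_seqReach (N : PNet P Tr A) (D : P ⊕ Tr → Loc) {σ : List A} {M M2 : P → ℕ}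
    (h : N.seqReach σ M M2) : (aug N D).seqReach σ (liftM M) (liftM M2) := by
  induction σ generalizing M with
  | nil => exact lift_taus N D h
  | cons a σ ih =>
    obtain ⟨M1, M1', h1, ⟨t, hl, hf⟩, h3⟩ := h
    exact ⟨liftM M1, liftM M1', lift_taus N D h1, ⟨t, hl, lift_fire N D hf⟩, ih h3⟩

lemma preStep_single (N : PNet P Tr A) (t : Tr) (p : P) :
    N.preStep (Finsupp.single t 1) p = N.pre t p := by
  simp [PNet.preStep, Finsupp.sum_single_index]

lemma postStep_single (N : PNet P Tr A) (t : Tr) (p : P) :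
    N.postStep (Finsupp.single t 1) p = N.post t p := by
  simp [PNet.postStep, Finsupp.sum_single_index]

lemma reachable_fire (N : PNet P Tr A) {M M2 : P → ℕ} {t : Tr}
    (hM : N.Reachable M) (h : N.fire M t M2) : N.Reachable M2 := by
  obtain ⟨⟨ht, hpre⟩, heq⟩ := h
  refine hM.step (G := Finsupp.single t 1) ⟨?_, ?_, ?_, ?_⟩
  · simp
  · intro u hu
    rw [Finsupp.support_single_ne_zero t one_ne_zero] at hu
    simp only [Finset.coe_singleton, Set.mem_singleton_iff] at hu
    subst hu; exact ht
  · intro p; rw [preStep_single]; exact hpre p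
  · intro p; rw [preStep_single, postStep_single]; exact heq p

lemma reachable_taus (N : PNet P Tr A) {M M2 : P → ℕ}
    (hM : N.Reachable M) (h : N.Taus M M2) : N.Reachable M2 := by
  induction h with
  | refl => exact hM
  | tail hab hbc ih =>
    obtain ⟨t, _, hf⟩ := hbc
    exact reachable_fire N ih hf

lemma reachable_seqReach (N : PNet P Tr A) {σ : List A} {M M2 : P → ℕ}
    (hM : N.Reachable M) (h : N.seqReach σ M M2) : N.Reachable M2 := by
  induction σ generalizing M with
  | nil => exact reachable_taus N hM h
  | cons a σ ih =>
    obtain ⟨M1, M1', h1, ⟨t, _, hf⟩, h3⟩ := h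
    exact ih (reachable_fire N (reachable_taus N hM h1) hf) h3

/-- In the augmented net, every reachable marking has exactly one token on each
run place. -/
lemma aug_run_invariant (N : PNet P Tr A) (D : P ⊕ Tr → Loc)
    {M' : (P ⊕ Loc) → ℕ} (h : (aug N D).Reachable M') (ℓ : Loc) :
    M' (Sum.inr ℓ) = 1 := by
  induction h with
  | refl => rfl
  | @step M G M2 _ hstep ih =>
    obtain ⟨_, _, hle, heq⟩ := hstep
    have hpp : (aug N D).preStep G (Sum.inr ℓ) = (aug N D).postStep G (Sum.inr ℓ) := rfl
    have h1 := hle (Sum.inr ℓ)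
    have h2 := heq (Sum.inr ℓ)
    rw [ih] at h1 h2
    omega

lemma aug_labCount (N : PNet P Tr A) (D : P ⊕ Tr → Loc) (G : Tr →₀ ℕ) (a : A) :
    (aug N D).labCount G a = N.labCount G a := rfl

lemma stepTo_of_aug (N : PNet P Tr A) (D : P ⊕ Tr → Loc) {M : P → ℕ} {X : A → ℕ}
    (h : (aug N D).stepTo (liftM M) X) : N.stepTo M X := by
  obtain ⟨G, hne, hsub, hvis, hle, hlab⟩ := h
  exact ⟨G, hne, hsub, hvis, fun p => hle (Sum.inl p), hlab⟩

lemma aug_stepTo (N : PNet P Tr A) (D : P ⊕ Tr → Loc)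
    (hD2 : ∀ t u, N.Conc t u → N.l t ≠ none → N.l u ≠ none →
      D (Sum.inr t) ≠ D (Sum.inr u))
    {M : P → ℕ} {X : A → ℕ} (hM : N.Reachable M) (h : N.stepTo M X) :
    (aug N D).stepTo (liftM M) X := by
  obtain ⟨G, hne, hsub, hvis, hle, hlab⟩ := h
  refine ⟨G, hne, hsub, hvis, ?_, hlab⟩
  rintro (p | ℓ)
  · exact hle p
  · -- the run place of location ℓ: at most one transition of G is located there
    show (G.sum fun t n => n * (aug N D).pre t (Sum.inr ℓ)) ≤ 1
    have hrw : (G.sum fun t n => n * (aug N D).pre t (Sum.inr ℓ)) =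
        ∑ t ∈ G.support.filter (fun t => t ∈ N.trans ∧ D (Sum.inr t) = ℓ), G t := by
      rw [Finsupp.sum, Finset.sum_filter]
      refine Finset.sum_congr rfl fun t _ => ?_
      simp only [aug, Sum.elim_inr]
      split_ifs <;> simp
    rw [hrw]
    set S := G.support.filter (fun t => t ∈ N.trans ∧ D (Sum.inr t) = ℓ) with hS
    by_contra hcon
    push_neg at hcon
    have h2 : 2 ≤ ∑ t ∈ S, G t := hcon
    have hSne : S.Nonempty := by
      by_contra hemp
      rw [Finset.not_nonempty_iff_eq_empty] at hemp
      simp [hemp] at h2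
    obtain ⟨t, htS⟩ := hSne
    have htsupp : t ∈ G.support := Finset.mem_of_mem_filter t htS
    have htloc : D (Sum.inr t) = ℓ := (Finset.mem_filter.mp htS).2.2
    have htvis : N.l t ≠ none := hvis t htsupp
    by_cases hst : ∃ u ∈ S, u ≠ t
    · obtain ⟨u, huS, hut⟩ := hst
      have husupp : u ∈ G.support := Finset.mem_of_mem_filter u huS
      have huloc : D (Sum.inr u) = ℓ := (Finset.mem_filter.mp huS).2.2
      have hconc : N.Conc t u := by
        refine ⟨hsub htsupp, hsub husupp, M, hM, fun p => ?_⟩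
        have hsum : ∑ v ∈ ({t, u} : Finset Tr), G v * N.pre v p ≤ N.preStep G p := by
          apply Finset.sum_le_sum_of_subset
          intro v hv
          rcases Finset.mem_insert.mp hv with rfl | hv
          · exact htsupp
          · rw [Finset.mem_singleton] at hv; subst hv; exact husupp
        rw [Finset.sum_pair (Ne.symm hut)] at hsum
        have hGt : 1 ≤ G t := Nat.pos_of_ne_zero (Finsupp.mem_support_iff.mp htsupp)
        have hGu : 1 ≤ G u := Nat.pos_of_ne_zero (Finsupp.mem_support_iff.mp husupp)
        have := hle p
        nlinarith [hsum, this]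
      exact hD2 t u hconc htvis (hvis u husupp) (htloc.trans huloc.symm)
    · push_neg at hst
      have hSt : S = {t} := by
        apply Finset.eq_singleton_iff_unique_mem.mpr
        exact ⟨htS, fun u hu => hst u hu⟩
      rw [hSt, Finset.sum_singleton] at h2
      have hconc : N.Conc t t := by
        refine ⟨hsub htsupp, hsub htsupp, M, hM, fun p => ?_⟩
        have hsum : G t * N.pre t p ≤ N.preStep G p :=
          Finset.single_le_sum (f := fun v => G v * N.pre v p)
            (fun v _ => Nat.zero_le _) htsupp
        have := hle p
        nlinarith [hsum, this]
      exact hD2 t t hconc htvis htvis rfl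
  
lemma aug_M0 (N : PNet P Tr A) (D : P ⊕ Tr → Loc) :
    (aug N D).M0 = liftM N.M0 := rfl

lemma aug_distributed (N : PNet P Tr A) (D : P ⊕ Tr → Loc)
    (hD1 : ∀ t p, N.pre t p ≠ 0 → D (Sum.inr t) = D (Sum.inl p)) :
    (aug N D).Distributed := by
  refine ⟨Loc, Sum.elim (Sum.elim (fun p => D (Sum.inl p)) id)
    (fun t => D (Sum.inr t)), ?_, ?_⟩
  · rintro t (p | ℓ) hne
    · exact hD1 t p hne
    · simp only [aug, Sum.elim_inr] at hne
      split_ifs at hne with hc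
      · simpa using hc.2
      · exact absurd rfl hne
  · rintro t u ⟨ht, hu, M', hre, hle⟩ heq
    simp only [Sum.elim_inr] at heq
    have h1 := hle (Sum.inr (D (Sum.inr t)))
    have hrun := aug_run_invariant N D hre (D (Sum.inr t))
    have hpt : (aug N D).pre t (Sum.inr (D (Sum.inr t))) = 1 := by
      simp only [aug, Sum.elim_inr]
      rw [if_pos ⟨ht, trivial⟩]
    have hpu : (aug N D).pre u (Sum.inr (D (Sum.inr t))) = 1 := by
      simp only [aug, Sum.elim_inr]
      rw [if_pos ⟨hu, heq.symm⟩]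
    omega

lemma aug_srp (N : PNet P Tr A) (D : P ⊕ Tr → Loc)
    (hD2 : ∀ t u, N.Conc t u → N.l t ≠ none → N.l u ≠ none →
      D (Sum.inr t) ≠ D (Sum.inr u)) (σ : List A) (X : Set (A → ℕ)) :
    (aug N D).StepReadyPair σ X ↔ N.StepReadyPair σ X := by
  constructor
  · rintro ⟨M', hseq, hnotau, hX⟩
    rw [aug_M0] at hseq
    obtain ⟨M, rfl, hseqN⟩ := seqReach_lift N D hseq
    have hreach : N.Reachable M := reachable_seqReach N PNet.Reachable.refl hseqN
    refine ⟨M, hseqN, ?_, ?_⟩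
    · rintro M2 ⟨t, hl, hf⟩
      exact hnotau (liftM M2) ⟨t, hl, lift_fire N D hf⟩
    · rw [hX]
      ext Y
      exact ⟨fun hy => stepTo_of_aug N D hy, fun hy => aug_stepTo N D hD2 hreach hy⟩
  · rintro ⟨M, hseq, hnotau, hX⟩
    have hreach : N.Reachable M := reachable_seqReach N PNet.Reachable.refl hseq
    refine ⟨liftM M, ?_, ?_, ?_⟩
    · rw [aug_M0]; exact lift_seqReach N D hseq
    · rintro M2 ⟨t, hl, hf⟩
      obtain ⟨Mc, rfl, hfc⟩ := fire_lift N D hf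
      exact hnotau Mc ⟨t, hl, hfc⟩
    · rw [hX]
      ext Y
      exact ⟨fun hy => aug_stepTo N D hD2 hreach hy, fun hy => stepTo_of_aug N D hy⟩

end EDtoD

/-- for any externally distributed net `N` there is a distributed
net `N'` with `N' ≈R N`. -/
theorem externally_distributed_to_distributed {P Tr A : Type} (N : PNet P Tr A)
    (h : N.ExternallyDistributed) :
    ∃ (P' Tr' : Type) (N' : PNet P' Tr' A),
      N'.Distributed ∧ StepReadinessEquiv N' N := by
  obtain ⟨Loc, D, hD1, hD2⟩ := h
  exact ⟨P ⊕ Loc, Tr, EDtoD.aug N D, EDtoD.aug_distributed N D hD1,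
    fun σ X => EDtoD.aug_srp N D hD2 σ X⟩
end

section
/- Let N be a plain structural conflict Petri net. If N has a fully reachable pure M (that is, there exist transitions t, u, v with •t ∩ •u ≠ ∅, •u ∩ •v ≠ ∅, •t ∩ •v = ∅, and a reachable marking M ∈ [M0⟩ with •t ∪ •u ∪ •v ≤ M), then N is not distributable up to step readiness equivalence: there exists no distributed Petri net N′ with N′ ≈R N. -/
open scoped Classical

namespace PNet

variable {P Tr A : Type} (N : PNet P Tr A)

lemma preStep_add' (G1 G2 : Tr →₀ ℕ) (p : P) :
    N.preStep (G1 + G2) p = N.preStep G1 p + N.preStep G2 p := by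
  unfold preStep
  rw [Finsupp.sum_add_index' (fun t => by simp) (fun t b1 b2 => by ring)]

lemma postStep_add' (G1 G2 : Tr →₀ ℕ) (p : P) :
    N.postStep (G1 + G2) p = N.postStep G1 p + N.postStep G2 p := by
  unfold postStep
  rw [Finsupp.sum_add_index' (fun t => by simp) (fun t b1 b2 => by ring)]

lemma preStep_single' (t : Tr) (n : ℕ) (p : P) :
    N.preStep (Finsupp.single t n) p = n * N.pre t p := by
  unfold preStep
  rw [Finsupp.sum_single_index (by simp)]

lemma postStep_single' (t : Tr) (n : ℕ) (p : P) :
    N.postStep (Finsupp.single t n) p = n * N.post t p := by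
  unfold postStep
  rw [Finsupp.sum_single_index (by simp)]

lemma preStep_zero (p : P) : N.preStep 0 p = 0 := by
  simp [preStep]

lemma postStep_zero (p : P) : N.postStep 0 p = 0 := by
  simp [postStep]

lemma preStep_eq_sum (G : Tr →₀ ℕ) (p : P) :
    N.preStep G p = ∑ x ∈ G.support, G x * N.pre x p := rfl

lemma pre_le_preStep {G : Tr →₀ ℕ} {t : Tr} (ht : t ∈ G.support) (p : P) :
    N.pre t p ≤ N.preStep G p := by
  have h1 : 1 ≤ G t := Nat.one_le_iff_ne_zero.mpr (Finsupp.mem_support_iff.mp ht)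
  calc N.pre t p ≤ G t * N.pre t p := Nat.le_mul_of_pos_left _ (by omega)
    _ ≤ ∑ x ∈ G.support, G x * N.pre x p :=
        Finset.single_le_sum (f := fun x => G x * N.pre x p) (fun x _ => Nat.zero_le _) ht
    _ = N.preStep G p := rfl

lemma pair_le_preStep {G : Tr →₀ ℕ} {t u : Tr} (htu : t ≠ u)
    (ht : t ∈ G.support) (hu : u ∈ G.support) (p : P) :
    N.pre t p + N.pre u p ≤ N.preStep G p := by
  have h1 : 1 ≤ G t := Nat.one_le_iff_ne_zero.mpr (Finsupp.mem_support_iff.mp ht)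
  have h2 : 1 ≤ G u := Nat.one_le_iff_ne_zero.mpr (Finsupp.mem_support_iff.mp hu)
  have hsub : ({t, u} : Finset Tr) ⊆ G.support := by
    intro x hx
    rcases Finset.mem_insert.mp hx with rfl | hx
    · exact ht
    · rw [Finset.mem_singleton] at hx; subst hx; exact hu
  have hle : ∑ x ∈ ({t, u} : Finset Tr), G x * N.pre x p ≤
      ∑ x ∈ G.support, G x * N.pre x p :=
    Finset.sum_le_sum_of_subset hsub
  rw [Finset.sum_pair htu] at hle
  have ha : N.pre t p ≤ G t * N.pre t p := Nat.le_mul_of_pos_left _ (by omega)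
  have hb : N.pre u p ≤ G u * N.pre u p := Nat.le_mul_of_pos_left _ (by omega)
  calc N.pre t p + N.pre u p ≤ G t * N.pre t p + G u * N.pre u p := by omega
    _ ≤ ∑ x ∈ G.support, G x * N.pre x p := hle
    _ = N.preStep G p := rfl

lemma exists_of_labCount_ne_zero {G : Tr →₀ ℕ} {a : A} (h : N.labCount G a ≠ 0) :
    ∃ t ∈ G.support, N.l t = some a := by
  unfold labCount at h
  obtain ⟨t, ht, hne⟩ := Finset.exists_ne_zero_of_sum_ne_zero h
  refine ⟨t, ht, ?_⟩
  by_contra hc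
  simp [hc] at hne

lemma isStep_of_fire {M M' : P → ℕ} {t : Tr} (h : N.fire M t M') :
    N.IsStep M (Finsupp.single t 1) M' := by
  obtain ⟨⟨htr, hen⟩, heq⟩ := h
  refine ⟨by simp, ?_, ?_, ?_⟩
  · intro x hx
    rw [Finset.mem_coe, Finsupp.support_single_ne_zero _ one_ne_zero,
      Finset.mem_singleton] at hx
    subst hx; exact htr
  · intro p; rw [preStep_single', one_mul]; exact hen p
  · intro p; rw [preStep_single', postStep_single', one_mul, one_mul]; exact heq p

lemma reachable_taus {M M' : P → ℕ} (h : N.Taus M M') (hr : N.Reachable M) :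
    N.Reachable M' := by
  induction h with
  | refl => exact hr
  | tail h1 h2 ih =>
    obtain ⟨t, _, hf⟩ := h2
    exact ih.step (N.isStep_of_fire hf)

lemma reachable_seqReach :
    ∀ (σ : List A) (M M' : P → ℕ), N.seqReach σ M M' → N.Reachable M → N.Reachable M' := by
  intro σ
  induction σ with
  | nil => exact fun M M' h hr => N.reachable_taus h hr
  | cons a σ ih =>
    rintro M M' ⟨M1, M2, h1, ⟨t, _, hf⟩, h3⟩ hr
    exact ih M2 M' h3 ((N.reachable_taus h1 hr).step (N.isStep_of_fire hf))

lemma seqReach_taus_left :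
    ∀ (σ : List A) {M0 M M' : P → ℕ}, N.Taus M0 M → N.seqReach σ M M' → N.seqReach σ M0 M' := by
  intro σ
  cases σ with
  | nil => exact fun h h2 => h.trans h2
  | cons a σ =>
    rintro M0 M M' h ⟨M1, M2, h1, h2, h3⟩
    exact ⟨M1, M2, h.trans h1, h2, h3⟩

lemma seqReach_append :
    ∀ (σ τ' : List A) {M0 M M' : P → ℕ},
      N.seqReach σ M0 M → N.seqReach τ' M M' → N.seqReach (σ ++ τ') M0 M' := by
  intro σ
  induction σ with
  | nil => exact fun τ' M0 M M' h h2 => N.seqReach_taus_left τ' h h2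
  | cons a σ ih =>
    rintro τ' M0 M M' ⟨M1, M2, h1, h2, h3⟩ h4
    exact ⟨M1, M2, h1, h2, ih τ' h3 h4⟩

lemma step_linearize (hplain : N.Plain) :
    ∀ (n : ℕ) (M : P → ℕ) (G : Tr →₀ ℕ) (M' : P → ℕ),
      (∑ x ∈ G.support, G x) = n → N.IsStep M G M' → ∃ σ, N.seqReach σ M M' := by
  intro n
  induction n using Nat.strong_induction_on with
  | _ n ih =>
    intro M G M' hn hstep
    obtain ⟨hne, hsub, hpre, heq⟩ := hstep
    obtain ⟨t, ht⟩ := Finsupp.support_nonempty_iff.mpr hne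
    have httr : t ∈ N.trans := hsub ht
    obtain ⟨a, ha⟩ := Option.ne_none_iff_exists'.mp (hplain.1 t httr)
    set G' : Tr →₀ ℕ := G - Finsupp.single t 1 with hG'
    have hGt : 1 ≤ G t := Nat.one_le_iff_ne_zero.mpr (Finsupp.mem_support_iff.mp ht)
    have hGdec : G' + Finsupp.single t 1 = G := by
      ext x
      simp only [hG', Finsupp.add_apply, Finsupp.tsub_apply, Finsupp.single_apply]
      by_cases hx : t = x
      · subst hx
        rw [if_pos rfl]
        omega
      · simp [hx]
    have hpreG : ∀ p, N.preStep G p = N.preStep G' p + N.pre t p := by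
      intro p; rw [← hGdec, preStep_add', preStep_single', one_mul]
    have hpostG : ∀ p, N.postStep G p = N.postStep G' p + N.post t p := by
      intro p; rw [← hGdec, postStep_add', postStep_single', one_mul]
    set M1 : P → ℕ := fun p => M p - N.pre t p + N.post t p with hM1
    have hfire : N.fire M t M1 := by
      refine ⟨⟨httr, fun p => ?_⟩, fun p => rfl⟩
      have := hpre p
      have h2 := hpreG p
      omega
    by_cases h0 : G' = 0
    · refine ⟨[a], M, M1, Relation.ReflTransGen.refl, ⟨t, ha, hfire⟩, ?_⟩
      have hM'M1 : M1 = M' := by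
        funext p
        have h1 := heq p
        have h2 := hpreG p
        have h3 := hpostG p
        have h4 := hpre p
        rw [h0, N.preStep_zero] at h2
        rw [h0, N.postStep_zero] at h3
        simp only [hM1]
        omega
      rw [hM'M1]
      exact Relation.ReflTransGen.refl
    · have hsub' : ↑G'.support ⊆ N.trans := by
        intro x hx
        exact hsub (Finset.mem_coe.mpr (Finsupp.support_tsub (Finset.mem_coe.mp hx)))
      have hstep' : N.IsStep M1 G' M' := by
        refine ⟨h0, hsub', fun p => ?_, fun p => ?_⟩
        · have h2 := hpreG p; have h4 := hpre p
          simp only [hM1]; omega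
        · have h1 := heq p
          have h2 := hpreG p
          have h3 := hpostG p
          have h4 := hpre p
          simp only [hM1]
          omega
      have hdec : (∑ x ∈ G'.support, G' x) < n := by
        have hle : ∑ x ∈ G'.support, G' x ≤ ∑ x ∈ G.support, G' x :=
          Finset.sum_le_sum_of_subset Finsupp.support_tsub
        have hlt : ∑ x ∈ G.support, G' x < ∑ x ∈ G.support, G x := by
          refine Finset.sum_lt_sum (fun x _ => ?_) ⟨t, ht, ?_⟩
          · simp only [hG', Finsupp.tsub_apply]; omega
          · have h5 : G' t = G t - 1 := by
              rw [hG']; simp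
            omega
        omega
      obtain ⟨σ', hσ'⟩ := ih _ hdec M1 G' M' rfl hstep'
      exact ⟨a :: σ', M, M1, Relation.ReflTransGen.refl, ⟨t, ha, hfire⟩, hσ'⟩

lemma reachable_to_seq (hplain : N.Plain) {M : P → ℕ} (h : N.Reachable M) :
    ∃ σ, N.seqReach σ N.M0 M := by
  induction h with
  | refl => exact ⟨[], Relation.ReflTransGen.refl⟩
  | step hr hs ih =>
    obtain ⟨σ, hσ⟩ := ih
    obtain ⟨σ', hσ'⟩ := N.step_linearize hplain _ _ _ _ rfl hs
    exact ⟨σ ++ σ', N.seqReach_append _ _ hσ hσ'⟩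

lemma plain_no_tau (hplain : N.Plain) (M M' : P → ℕ) : ¬ N.tauFire M M' := by
  rintro ⟨t, hl, ⟨⟨htr, -⟩, -⟩⟩
  exact hplain.1 t htr hl

lemma pairG_ne_zero {t v : Tr} (h : t ≠ v) :
    (Finsupp.single t 1 + Finsupp.single v 1 : Tr →₀ ℕ) ≠ 0 := by
  intro hc
  have h2 := DFunLike.congr_fun hc t
  simp [Finsupp.single_apply, Ne.symm h] at h2

lemma pairG_support {t v : Tr} (h : t ≠ v) :
    (Finsupp.single t 1 + Finsupp.single v 1 : Tr →₀ ℕ).support = {t, v} := by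
  have hd : Disjoint (Finsupp.single t 1 : Tr →₀ ℕ).support
      (Finsupp.single v 1 : Tr →₀ ℕ).support := by
    rw [Finsupp.support_single_ne_zero _ one_ne_zero,
      Finsupp.support_single_ne_zero _ one_ne_zero,
      Finset.disjoint_singleton_left, Finset.mem_singleton]
    exact h
  rw [Finsupp.support_add_eq hd, Finsupp.support_single_ne_zero _ one_ne_zero,
    Finsupp.support_single_ne_zero _ one_ne_zero]
  ext x
  simp [or_comm]

lemma pairG_apply_left {t v : Tr} (h : t ≠ v) :
    (Finsupp.single t 1 + Finsupp.single v 1 : Tr →₀ ℕ) t = 1 := by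
  simp [Finsupp.single_apply, Ne.symm h]

lemma pairG_apply_right {t v : Tr} (h : t ≠ v) :
    (Finsupp.single t 1 + Finsupp.single v 1 : Tr →₀ ℕ) v = 1 := by
  simp [Finsupp.single_apply, h]

lemma labCount_pairG {t v : Tr} {a c : A} (h : t ≠ v)
    (hat : N.l t = some a) (hcv : N.l v = some c) (d : A) :
    N.labCount (Finsupp.single t 1 + Finsupp.single v 1) d =
      (if a = d then 1 else 0) + (if c = d then 1 else 0) := by
  unfold labCount
  rw [pairG_support h, Finset.sum_pair h, pairG_apply_left h, pairG_apply_right h,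
    hat, hcv]
  simp

lemma labCount_singleG {u : Tr} {b : A} (hbu : N.l u = some b) (d : A) :
    N.labCount (Finsupp.single u 1) d = if b = d then 1 else 0 := by
  unfold labCount
  rw [Finsupp.support_single_ne_zero _ one_ne_zero, Finset.sum_singleton,
    Finsupp.single_apply, if_pos rfl, hbu]
  simp

end PNet

/-- a plain structural conflict net with a fully reachable pure M is
not distributable up to step readiness equivalence. -/
theorem fullM_not_distributable {P Tr A : Type} (N : PNet P Tr A)
    (hplain : N.Plain) (hsc : N.StructuralConflict)
    (hM : N.FullyReachablePureM) :
    ¬ ∃ (P' Tr' : Type) (N' : PNet P' Tr' A),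
        N'.Distributed ∧ StepReadinessEquiv N' N := by
  rintro ⟨P', Tr', N', ⟨Loc, D, hD1, hD2⟩, hequiv⟩
  obtain ⟨t, u, v, htT, huT, hvT, ⟨p0, hp0t, hp0u⟩, ⟨q0, hq0u, hq0v⟩, htv, M, hMreach, hMle⟩ := hM
  obtain ⟨a, ha⟩ := Option.ne_none_iff_exists'.mp (hplain.1 t htT)
  obtain ⟨b, hb⟩ := Option.ne_none_iff_exists'.mp (hplain.1 u huT)
  obtain ⟨c, hc⟩ := Option.ne_none_iff_exists'.mp (hplain.1 v hvT)
  have htu : t ≠ u := by rintro rfl; rcases htv q0 with h | h <;> contradiction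
  have huv : u ≠ v := by rintro rfl; rcases htv p0 with h | h <;> contradiction
  have htv2 : t ≠ v := by rintro rfl; rcases htv p0 with h | h <;> contradiction
  have hab : a ≠ b := fun h => htu (hplain.2 t htT u huT (by rw [ha, hb, h]))
  have hbc : b ≠ c := fun h => huv (hplain.2 u huT v hvT (by rw [hb, hc, h]))
  have hac : a ≠ c := fun h => htv2 (hplain.2 t htT v hvT (by rw [ha, hc, h]))
  -- bounds from M
  have hMt : ∀ p, N.pre t p ≤ M p := fun p =>
    le_trans (le_trans (le_max_left _ _) (le_max_left _ _)) (hMle p)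
  have hMu : ∀ p, N.pre u p ≤ M p := fun p =>
    le_trans (le_trans (le_max_right _ _) (le_max_left _ _)) (hMle p)
  have hMv : ∀ p, N.pre v p ≤ M p := fun p => le_trans (le_max_right _ _) (hMle p)
  -- ready pair of N
  obtain ⟨σ, hσ⟩ := N.reachable_to_seq hplain hMreach
  have hrp : N.StepReadyPair σ {Y | N.stepTo M Y} :=
    ⟨M, hσ, fun M'' => N.plain_no_tau hplain M M'', rfl⟩
  obtain ⟨M', hσ', hτ', hX⟩ := (hequiv σ _).mpr hrp
  have hXiff : ∀ Y, N.stepTo M Y ↔ N'.stepTo M' Y := fun Y => Set.ext_iff.mp hX Y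
  have hM'reach : N'.Reachable M' := N'.reachable_seqReach σ _ _ hσ' PNet.Reachable.refl
  -- the relevant ready multisets
  set fB : A → ℕ := fun d => if b = d then 1 else 0 with hfB
  set fAC : A → ℕ := fun d => (if a = d then 1 else 0) + (if c = d then 1 else 0) with hfAC
  set fAB : A → ℕ := fun d => (if a = d then 1 else 0) + (if b = d then 1 else 0) with hfAB
  set fBC : A → ℕ := fun d => (if b = d then 1 else 0) + (if c = d then 1 else 0) with hfBC
  -- N-side: fB ∈ X
  have hstepB : N.stepTo M fB := by
    refine ⟨Finsupp.single u 1, by simp, ?_, ?_, ?_, N.labCount_singleG hb⟩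
    · intro x hx
      rw [Finset.mem_coe, Finsupp.support_single_ne_zero _ one_ne_zero,
        Finset.mem_singleton] at hx
      subst hx; exact huT
    · intro x hx
      rw [Finsupp.support_single_ne_zero _ one_ne_zero, Finset.mem_singleton] at hx
      subst hx; rw [hb]; exact Option.some_ne_none b
    · intro p; rw [N.preStep_single', one_mul]; exact hMu p
  -- N-side: fAC ∈ X
  have hstepAC : N.stepTo M fAC := by
    refine ⟨Finsupp.single t 1 + Finsupp.single v 1, PNet.pairG_ne_zero htv2, ?_, ?_, ?_,
      N.labCount_pairG htv2 ha hc⟩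
    · intro x hx
      rw [Finset.mem_coe, PNet.pairG_support htv2, Finset.mem_insert,
        Finset.mem_singleton] at hx
      rcases hx with rfl | rfl
      · exact htT
      · exact hvT
    · intro x hx
      rw [PNet.pairG_support htv2, Finset.mem_insert, Finset.mem_singleton] at hx
      rcases hx with rfl | rfl
      · rw [ha]; exact Option.some_ne_none a
      · rw [hc]; exact Option.some_ne_none c
    · intro p
      rw [N.preStep_add', N.preStep_single', N.preStep_single', one_mul, one_mul]
      have h1 := hMt p
      have h3 := hMv p
      rcases htv p with h | h <;> omega
  -- N-side: fAB ∉ X, fBC ∉ X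
  have hnAB : ¬ N.stepTo M fAB := by
    rintro ⟨G, hGne, hGsub, hGvis, hGpre, hGlab⟩
    have h1 : N.labCount G a ≠ 0 := by
      rw [hGlab a]; simp [hfAB]
    have h2 : N.labCount G b ≠ 0 := by
      rw [hGlab b]; simp [hfAB, hab]
    obtain ⟨t₁, ht₁s, ht₁l⟩ := N.exists_of_labCount_ne_zero h1
    obtain ⟨u₁, hu₁s, hu₁l⟩ := N.exists_of_labCount_ne_zero h2
    have ht₁ : t₁ = t := hplain.2 t₁ (hGsub ht₁s) t htT (by rw [ht₁l, ha])
    have hu₁ : u₁ = u := hplain.2 u₁ (hGsub hu₁s) u huT (by rw [hu₁l, hb])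
    rw [ht₁] at ht₁s
    rw [hu₁] at hu₁s
    have hconc : N.Conc t u :=
      ⟨htT, huT, M, hMreach, fun p =>
        le_trans (N.pair_le_preStep htu ht₁s hu₁s p) (hGpre p)⟩
    rcases hsc t u hconc p0 with h | h <;> contradiction
  have hnBC : ¬ N.stepTo M fBC := by
    rintro ⟨G, hGne, hGsub, hGvis, hGpre, hGlab⟩
    have h1 : N.labCount G b ≠ 0 := by
      rw [hGlab b]; simp [hfBC]
    have h2 : N.labCount G c ≠ 0 := by
      rw [hGlab c]; simp [hfBC, hbc]
    obtain ⟨u₁, hu₁s, hu₁l⟩ := N.exists_of_labCount_ne_zero h1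
    obtain ⟨v₁, hv₁s, hv₁l⟩ := N.exists_of_labCount_ne_zero h2
    have hu₁ : u₁ = u := hplain.2 u₁ (hGsub hu₁s) u huT (by rw [hu₁l, hb])
    have hv₁ : v₁ = v := hplain.2 v₁ (hGsub hv₁s) v hvT (by rw [hv₁l, hc])
    rw [hu₁] at hu₁s
    rw [hv₁] at hv₁s
    have hconc : N.Conc u v :=
      ⟨huT, hvT, M, hMreach, fun p =>
        le_trans (N.pair_le_preStep huv hu₁s hv₁s p) (hGpre p)⟩
    rcases hsc u v hconc q0 with h | h <;> contradiction
  -- transfer to N'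
  obtain ⟨GB, hGBne, hGBsub, hGBvis, hGBpre, hGBlab⟩ := (hXiff fB).mp hstepB
  obtain ⟨GAC, hGACne, hGACsub, hGACvis, hGACpre, hGAClab⟩ := (hXiff fAC).mp hstepAC
  have hnAB' : ¬ N'.stepTo M' fAB := fun h => hnAB ((hXiff fAB).mpr h)
  have hnBC' : ¬ N'.stepTo M' fBC := fun h => hnBC ((hXiff fBC).mpr h)
  -- extract u' labelled b
  have hGBb : N'.labCount GB b ≠ 0 := by rw [hGBlab b]; simp [hfB]
  obtain ⟨u', hu's, hu'l⟩ := N'.exists_of_labCount_ne_zero hGBb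
  have hu'T : u' ∈ N'.trans := hGBsub hu's
  have hu'en : ∀ p, N'.pre u' p ≤ M' p := fun p =>
    le_trans (N'.pre_le_preStep hu's p) (hGBpre p)
  -- extract t' labelled a and v' labelled c, concurrently enabled
  have hGACa : N'.labCount GAC a ≠ 0 := by rw [hGAClab a]; simp [hfAC]
  have hGACc : N'.labCount GAC c ≠ 0 := by
    rw [hGAClab c]; simp [hfAC, hac]
  obtain ⟨t', ht's, ht'l⟩ := N'.exists_of_labCount_ne_zero hGACa
  obtain ⟨v', hv's, hv'l⟩ := N'.exists_of_labCount_ne_zero hGACc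
  have ht'T : t' ∈ N'.trans := hGACsub ht's
  have hv'T : v' ∈ N'.trans := hGACsub hv's
  have ht'v' : t' ≠ v' := by
    rintro rfl; rw [ht'l] at hv'l; exact hac (Option.some_injective A hv'l)
  have ht'u' : t' ≠ u' := by
    rintro rfl; rw [ht'l] at hu'l; exact hab (Option.some_injective A hu'l)
  have hu'v' : u' ≠ v' := by
    rintro rfl; rw [hu'l] at hv'l; exact hbc (Option.some_injective A hv'l)
  have ht'en : ∀ p, N'.pre t' p ≤ M' p := fun p =>
    le_trans (N'.pre_le_preStep ht's p) (hGACpre p)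
  have hv'en : ∀ p, N'.pre v' p ≤ M' p := fun p =>
    le_trans (N'.pre_le_preStep hv's p) (hGACpre p)
  have htv'conc : ∀ p, N'.pre t' p + N'.pre v' p ≤ M' p := fun p =>
    le_trans (N'.pair_le_preStep ht'v' ht's hv's p) (hGACpre p)
  -- t' and u' share a preplace
  have hpTU : ∃ p, N'.pre t' p ≠ 0 ∧ N'.pre u' p ≠ 0 := by
    by_contra hcon
    push_neg at hcon
    apply hnAB'
    refine ⟨Finsupp.single t' 1 + Finsupp.single u' 1, PNet.pairG_ne_zero ht'u', ?_, ?_, ?_,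
      N'.labCount_pairG ht'u' ht'l hu'l⟩
    · intro x hx
      rw [Finset.mem_coe, PNet.pairG_support ht'u', Finset.mem_insert,
        Finset.mem_singleton] at hx
      rcases hx with rfl | rfl
      · exact ht'T
      · exact hu'T
    · intro x hx
      rw [PNet.pairG_support ht'u', Finset.mem_insert, Finset.mem_singleton] at hx
      rcases hx with rfl | rfl
      · rw [ht'l]; exact Option.some_ne_none a
      · rw [hu'l]; exact Option.some_ne_none b
    · intro p
      rw [N'.preStep_add', N'.preStep_single', N'.preStep_single', one_mul, one_mul]
      have h1 := ht'en p
      have h2 := hu'en p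
      rcases Nat.eq_zero_or_pos (N'.pre t' p) with h | h
      · omega
      · have := hcon p (by omega); omega
  have hpUV : ∃ p, N'.pre u' p ≠ 0 ∧ N'.pre v' p ≠ 0 := by
    by_contra hcon
    push_neg at hcon
    apply hnBC'
    refine ⟨Finsupp.single u' 1 + Finsupp.single v' 1, PNet.pairG_ne_zero hu'v', ?_, ?_, ?_,
      N'.labCount_pairG hu'v' hu'l hv'l⟩
    · intro x hx
      rw [Finset.mem_coe, PNet.pairG_support hu'v', Finset.mem_insert,
        Finset.mem_singleton] at hx
      rcases hx with rfl | rfl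
      · exact hu'T
      · exact hv'T
    · intro x hx
      rw [PNet.pairG_support hu'v', Finset.mem_insert, Finset.mem_singleton] at hx
      rcases hx with rfl | rfl
      · rw [hu'l]; exact Option.some_ne_none b
      · rw [hv'l]; exact Option.some_ne_none c
    · intro p
      rw [N'.preStep_add', N'.preStep_single', N'.preStep_single', one_mul, one_mul]
      have h1 := hu'en p
      have h2 := hv'en p
      rcases Nat.eq_zero_or_pos (N'.pre u' p) with h | h
      · omega
      · have := hcon p (by omega); omega
  obtain ⟨p1, hp1t, hp1u⟩ := hpTU
  obtain ⟨q1, hq1u, hq1v⟩ := hpUV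
  have hDt : D (Sum.inr t') = D (Sum.inr u') := by
    rw [hD1 t' p1 hp1t, hD1 u' p1 hp1u]
  have hDu : D (Sum.inr u') = D (Sum.inr v') := by
    rw [hD1 u' q1 hq1u, hD1 v' q1 hq1v]
  have hconc' : N'.Conc t' v' := ⟨ht'T, hv'T, M', hM'reach, htv'conc⟩
  exact hD2 t' v' hconc' (hDt.trans hDu)
end

section
/- Let (S,T,F,M0,ℓ) be a Petri net, T⁺ ⊆ T a set of transitions such that F restricted to S ∪ T⁺ is acyclic, and S⁺ ⊆ S a set of places. Let M ∈ ℕ^{S⁺} be a marking supported in S⁺ and H ∈ ℕ^{T⁺} a finite multiset of transitions from T⁺ such that M + ⟦H⟧ ∈ ℕ^S. Then: (a) for every place s that is faithful w.r.t. T⁺ and S⁺, (M + ⟦H⟧)(s) · *s ≤ M; and (b) for every k ∈ ℕ and every transition t with (M + ⟦H⟧) [k·{t}⟩, one has k · *t ≤ M. -/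
open scoped Classical

/-!
The proof is an induction on the number of distinct transitions in `H`. Since `F` is acyclic
on `S ∪ T⁺`, some transition `v` of `H` has an output that no transition of `H` consumes, so
all occurrences of `v` can be un-fired without leaving `ℕ^S`. A faithful place `s ∉ S⁺` is fed
only by one transition `t₀ ∈ T⁺` with weight one, and `M(s) = 0`, so `(M + ⟦H⟧)(s) ≤ H(t₀)`.
If `v = t₀`, then after un-firing `t₀` is enabled `H(t₀)` times and part (b) for the smaller
multiset applies to the path up to `t₀`; if `v ≠ t₀`, un-firing `v` does not decrease the
marking of `s`. Part (b) reduces to part (a) at the last place of the path before `t`.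
-/

namespace PNet

variable {P Tr A : Type} {N : PNet P Tr A} {Tp : Set Tr} {Sp : Set P} {M MH : P → ℕ}
  {H : Tr →₀ ℕ}

theorem tokN_eq_sum (G : Tr →₀ ℕ) (p : P) :
    N.tokN G p = G.sum fun t n => (n : ℤ) * ((N.post t p : ℤ) - N.pre t p) :=
  rfl

theorem tokN_add (G₁ G₂ : Tr →₀ ℕ) (p : P) :
    N.tokN (G₁ + G₂) p = N.tokN G₁ p + N.tokN G₂ p := by
  simp only [tokN_eq_sum]
  exact Finsupp.sum_add_index' (by simp) (by intros; push_cast; ring)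

theorem tokN_single (t : Tr) (m : ℕ) (p : P) :
    N.tokN (Finsupp.single t m) p = m * ((N.post t p : ℤ) - N.pre t p) := by
  rw [tokN_eq_sum]
  exact Finsupp.sum_single_index (by simp)

theorem tokN_eq_postStep_sub_preStep (G : Tr →₀ ℕ) (p : P) :
    N.tokN G p = N.postStep G p - N.preStep G p := by
  simp only [tokN, postStep, preStep, Finsupp.sum, Nat.cast_sum, Nat.cast_mul,
    ← Finset.sum_sub_distrib, mul_sub]

theorem postStep_eq_zero {G : Tr →₀ ℕ} {p : P} (h : ∀ t ∈ G.support, N.post t p = 0) :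
    N.postStep G p = 0 :=
  Finset.sum_eq_zero fun t ht => by simp [h t ht]

theorem preStep_eq_zero {G : Tr →₀ ℕ} {p : P} (h : ∀ t ∈ G.support, N.pre t p = 0) :
    N.preStep G p = 0 :=
  Finset.sum_eq_zero fun t ht => by simp [h t ht]

theorem postStep_eq_of_unique_post {G : Tr →₀ ℕ} {p : P} {t₀ : Tr} (h₀ : N.post t₀ p = 1)
    (h : ∀ t ∈ G.support, t ≠ t₀ → N.post t p = 0) : N.postStep G p = G t₀ := by
  rw [postStep, Finsupp.sum, Finset.sum_eq_single t₀ (fun t ht ht₀ => by simp [h t ht ht₀])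
    (fun ht₀ => by simp [Finsupp.notMem_support_iff.mp ht₀]), h₀, mul_one]

theorem apply_mul_post_le_postStep (G : Tr →₀ ℕ) (t : Tr) (p : P) :
    G t * N.post t p ≤ N.postStep G p := by
  by_cases ht : t ∈ G.support
  · exact Finset.single_le_sum (f := fun u => G u * N.post u p) (fun _ _ => Nat.zero_le _) ht
  · simp [Finsupp.notMem_support_iff.mp ht]

theorem le_of_forall_post_eq_zero {s : P} (hMH : (MH s : ℤ) = M s + N.tokN H s)
    (h : ∀ t ∈ H.support, N.post t s = 0) : MH s ≤ M s := by
  rw [tokN_eq_postStep_sub_preStep, postStep_eq_zero h] at hMH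
  omega

theorem le_of_unique_post {s : P} {t₀ : Tr} (hMH : (MH s : ℤ) = M s + N.tokN H s)
    (hMs : M s = 0) (h₀ : N.post t₀ s = 1) (h : ∀ t ∈ H.support, t ≠ t₀ → N.post t s = 0) :
    MH s ≤ H t₀ := by
  rw [tokN_eq_postStep_sub_preStep, postStep_eq_of_unique_post h₀ h, hMs] at hMH
  omega

theorem AcyclicOn.exists_mem_support_forall_pre_eq_zero (hacyc : N.AcyclicOn Tp)
    (hH : ↑H.support ⊆ Tp) (hne : H ≠ 0) :
    ∃ v ∈ H.support, ∀ q, N.post v q ≠ 0 → ∀ u ∈ H.support, N.pre u q = 0 := by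
  let R : P ⊕ Tr → P ⊕ Tr → Prop := fun x y => N.flow x y ≠ 0 ∧
    (∀ t, x = .inr t → t ∈ Tp) ∧ ∀ t, y = .inr t → t ∈ Tp
  let after : H.support → H.support → Prop := fun u v => Relation.TransGen R (.inr v) (.inr u)
  have : IsTrans _ after := ⟨fun _ _ _ h₁ h₂ => h₂.trans h₁⟩
  have : Std.Irrefl after := ⟨fun u => hacyc (.inr u)⟩
  obtain ⟨v, hv⟩ := Finsupp.support_nonempty_iff.mpr hne
  obtain ⟨⟨v, hv⟩, -, hmin⟩ :=
    (Finite.wellFounded_of_trans_of_irrefl after).has_min Set.univ ⟨⟨v, hv⟩, trivial⟩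
  refine ⟨v, hv, fun q hq u hu => by_contra fun hpre => hmin ⟨u, hu⟩ trivial ?_⟩
  exact .head (b := Sum.inl q) ⟨hq, by simpa using hH hv, by simp⟩
    (.single ⟨hpre, by simp, by simpa using hH hu⟩)

theorem AcyclicOn.exists_unfire (hacyc : N.AcyclicOn Tp) (hH : ↑H.support ⊆ Tp) (hne : H ≠ 0)
    (hMH : ∀ p, (MH p : ℤ) = M p + N.tokN H p) :
    ∃ v ∈ H.support, ∃ MH' : P → ℕ, (∀ p, (MH' p : ℤ) = M p + N.tokN (H.erase v) p) ∧
      (∀ p, H v * N.pre v p ≤ MH' p) ∧ ∀ p, N.post v p = 0 → MH p ≤ MH' p := by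
  obtain ⟨v, hv, hlast⟩ := hacyc.exists_mem_support_forall_pre_eq_zero hH hne
  have hpost : ∀ p, H v * N.post v p ≤ MH p := by
    intro p
    by_cases hp : N.post v p = 0
    · simp [hp]
    · have := hMH p
      rw [tokN_eq_postStep_sub_preStep, preStep_eq_zero (hlast p hp)] at this
      have := N.apply_mul_post_le_postStep H v p
      omega
  refine ⟨v, hv, fun p => MH p - H v * N.post v p + H v * N.pre v p, fun p => ?_,
    fun p => Nat.le_add_left _ _, fun p hp => by simp [hp]⟩
  have hsplit := congrArg (N.tokN · p) (Finsupp.single_add_erase v H)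
  simp only [tokN_add, tokN_single] at hsplit
  have := hMH p
  have := hpost p
  push_cast [this]
  linarith

theorem pathWeight_append_pair (π : List (P ⊕ Tr)) (y x : P ⊕ Tr) :
    N.pathWeight (π ++ [y, x]) = N.pathWeight (π ++ [y]) * N.flow y x := by
  induction π with
  | nil => simp [pathWeight]
  | cons a π ih =>
    cases π with
    | nil => simp [pathWeight]
    | cons b π => simp_all [pathWeight, mul_assoc]

theorem FaithfulPath.eq_singleton_or_append {π : List (P ⊕ Tr)} {x : P ⊕ Tr}
    (hπ : N.FaithfulPath Tp Sp π) (hx : π.getLast? = some x) :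
    π = [x] ∨ ∃ π' y, π = π' ++ [y, x] ∧ N.FaithfulPath Tp Sp (π' ++ [y]) ∧
      N.flow y x ≠ 0 ∧ ((∃ t ∈ Tp, y = .inr t) ∨ ∃ s, y = .inl s ∧ N.FaithfulPlace Tp Sp s) := by
  obtain ⟨⟨hne, hchain⟩, hnodes⟩ := hπ
  obtain ⟨π, x', rfl⟩ := (π.eq_nil_or_concat').resolve_left hne
  obtain rfl : x' = x := by simpa using hx
  rcases π.eq_nil_or_concat' with rfl | ⟨π', y, rfl⟩
  · exact .inl rfl
  rw [List.dropLast_concat] at hnodes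
  obtain ⟨hchain', -, hyx⟩ := List.isChain_append.mp hchain
  refine .inr ⟨π', y, by simp, ⟨⟨by simp, hchain'⟩, fun z hz => hnodes z ?_⟩, ?_, ?_⟩
  · exact List.dropLast_subset _ hz
  · exact hyx y (by simp) _ (by simp)
  · exact hnodes y (by simp)

theorem FaithfulPath.eq_singleton_or_append_inr_inl {π : List (P ⊕ Tr)} {s : P}
    (hπ : N.FaithfulPath Tp Sp π) (hs : π.getLast? = some (.inl s)) :
    π = [.inl s] ∨ ∃ π' u, π = π' ++ [.inr u, .inl s] ∧
      N.FaithfulPath Tp Sp (π' ++ [.inr u]) ∧ u ∈ Tp ∧ N.post u s ≠ 0 := by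
  rcases hπ.eq_singleton_or_append hs with h | ⟨π', y, rfl, hπ', hflow, ⟨u, hu, rfl⟩ | ⟨_, rfl, -⟩⟩
  · exact .inl h
  · exact .inr ⟨π', u, rfl, hπ', hu, hflow⟩
  · exact absurd rfl hflow

theorem FaithfulPath.eq_singleton_or_append_inl_inr {π : List (P ⊕ Tr)} {t : Tr}
    (hπ : N.FaithfulPath Tp Sp π) (ht : π.getLast? = some (.inr t)) :
    π = [.inr t] ∨ ∃ π' s, π = π' ++ [.inl s, .inr t] ∧
      N.FaithfulPath Tp Sp (π' ++ [.inl s]) ∧ N.FaithfulPlace Tp Sp s ∧ N.pre t s ≠ 0 := by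
  rcases hπ.eq_singleton_or_append ht with h | ⟨π', y, rfl, hπ', hflow, ⟨_, -, rfl⟩ | ⟨s, rfl, hs⟩⟩
  · exact .inl h
  · exact absurd rfl hflow
  · exact .inr ⟨π', s, rfl, hπ', hs, hflow⟩

/-- `c • *x ≤ M`, checked path by path. -/
def PathBound (N : PNet P Tr A) (Tp : Set Tr) (Sp : Set P) (M : P → ℕ) (c : ℕ) (x : P ⊕ Tr) :
    Prop :=
  ∀ π p, N.FaithfulPath Tp Sp π → π.head? = some (.inl p) → p ∈ Sp → π.getLast? = some x →
    c * N.pathWeight π ≤ M p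

theorem PathBound.mono {c c' : ℕ} {x : P ⊕ Tr} (h : N.PathBound Tp Sp M c x) (hc : c' ≤ c) :
    N.PathBound Tp Sp M c' x :=
  fun π p hπ hhead hp hlast => (Nat.mul_le_mul_right _ hc).trans (h π p hπ hhead hp hlast)

theorem PathBound.mul_faithOrig_le {c : ℕ} {x : P ⊕ Tr} (h : N.PathBound Tp Sp M c x) (p : P) :
    (c : ℕ∞) * N.faithOrig Tp Sp x p ≤ M p := by
  rw [faithOrig, ENat.mul_sSup]
  refine iSup₂_le ?_
  rintro _ ⟨π, hp, hπ, hhead, hlast, rfl⟩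
  exact_mod_cast h π p hπ hhead hp hlast

theorem PathBound.inr {k : ℕ} {t : Tr}
    (hplace : ∀ s, N.FaithfulPlace Tp Sp s → N.PathBound Tp Sp M (MH s) (.inl s))
    (hk : ∀ q, k * N.pre t q ≤ MH q) : N.PathBound Tp Sp M k (.inr t) := by
  intro π p hπ hhead hp hlast
  rcases hπ.eq_singleton_or_append_inl_inr hlast with rfl | ⟨π', s, rfl, hπ', hs, -⟩
  · simp at hhead
  · rw [pathWeight_append_pair]
    calc k * (N.pathWeight (π' ++ [.inl s]) * N.flow (.inl s) (.inr t))
        = k * N.pre t s * N.pathWeight (π' ++ [.inl s]) := by rw [flow]; ring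
      _ ≤ MH s * N.pathWeight (π' ++ [.inl s]) := Nat.mul_le_mul_right _ (hk s)
      _ ≤ M p := hplace s hs _ p hπ' (by simpa using hhead) hp (by simp)

theorem pathBound_of_faithfulPlace (hacyc : N.AcyclicOn Tp) (hM : ∀ p, M p ≠ 0 → p ∈ Sp)
    {H : Tr →₀ ℕ} {MH : P → ℕ} (hH : ↑H.support ⊆ Tp)
    (hMH : ∀ p, (MH p : ℤ) = M p + N.tokN H p) {s : P} (hs : N.FaithfulPlace Tp Sp s) :
    N.PathBound Tp Sp M (MH s) (.inl s) := by
  intro π p hπ hhead hp hlast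
  rcases hs with ⟨hsSp, hnoin⟩ | ⟨hsSp, t₀, -, ht₀s, huniq⟩
  · rcases hπ.eq_singleton_or_append_inr_inl hlast with rfl | ⟨-, u, -, -, hu, hus⟩
    · obtain rfl : s = p := by simpa using hhead
      simpa [pathWeight] using le_of_forall_post_eq_zero (hMH s) fun t ht => hnoin t (hH ht)
    · exact absurd (hnoin u hu) hus
  rcases hπ.eq_singleton_or_append_inr_inl hlast with rfl | ⟨π', u, rfl, hπ', hu, hus⟩
  · obtain rfl : s = p := by simpa using hhead
    exact absurd hp hsSp
  obtain rfl : t₀ = u := by_contra fun h => hus (huniq u hu (Ne.symm h))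
  have hMHs : MH s ≤ H t₀ := le_of_unique_post (hMH s) (by_contra fun h => hsSp (hM s h)) ht₀s
    fun t ht => huniq t (hH ht)
  rcases eq_or_ne H 0 with rfl | hne
  · simp [show MH s = 0 by simpa using hMHs]
  obtain ⟨v, hv, MH', hMH', hpre, hkept⟩ := hacyc.exists_unfire hH hne hMH
  have hH' : ↑(H.erase v).support ⊆ Tp := fun t ht =>
    hH (Finset.mem_of_mem_erase (by rwa [Finsupp.support_erase] at ht))
  have ih := fun s' (hs' : N.FaithfulPlace Tp Sp s') =>
    pathBound_of_faithfulPlace hacyc hM hH' hMH' hs'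
  by_cases hvt₀ : v = t₀
  · subst hvt₀
    rw [pathWeight_append_pair, flow, ht₀s, mul_one]
    exact (PathBound.inr ih hpre).mono hMHs _ p hπ' (by simpa using hhead) hp (by simp)
  · have hs : N.FaithfulPlace Tp Sp s := .inr ⟨hsSp, t₀, hu, ht₀s, huniq⟩
    exact (ih s hs).mono (hkept s (huniq v (hH hv) hvt₀)) _ p hπ hhead hp hlast
termination_by H.support.card
decreasing_by
  simpa using Finset.card_erase_lt_of_mem hv

end PNet

theorem faithful_origins_general {P Tr A : Type} (N : PNet P Tr A)
    (Tp : Set Tr) (Sp : Set P)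
    (hacyc : N.AcyclicOn Tp)
    (M : P → ℕ) (hM : ∀ p, M p ≠ 0 → p ∈ Sp)
    (H : Tr →₀ ℕ) (hH : ↑H.support ⊆ Tp)
    (MH : P → ℕ) (hMH : ∀ p, (MH p : ℤ) = (M p : ℤ) + N.tokN H p) :
    (∀ s, N.FaithfulPlace Tp Sp s →
      ∀ p, (MH s : ℕ∞) * N.faithOrig Tp Sp (Sum.inl s) p ≤ (M p : ℕ∞)) ∧
    ∀ (k : ℕ) (t : Tr), t ∈ N.trans → (∀ p, k * N.pre t p ≤ MH p) →
      ∀ p, (k : ℕ∞) * N.faithOrig Tp Sp (Sum.inr t) p ≤ (M p : ℕ∞) := by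
  have hplace := fun s (hs : N.FaithfulPlace Tp Sp s) =>
    N.pathBound_of_faithfulPlace hacyc hM hH hMH hs
  exact ⟨fun s hs => (hplace s hs).mul_faithOrig_le,
    fun _ _ _ hk => (PNet.PathBound.inr hplace hk).mul_faithOrig_le⟩

/-- the lemma on faithful origins: tokens in faithful places, and
enabled transitions, can be traced back to the original marking `M`. -/
theorem faithful_origins {P Tr A : Type} (N : PNet P Tr A)
    (Tp : Set Tr) (Sp : Set P) (hTp : Tp ⊆ N.trans) (hSp : Sp ⊆ N.places)
    (hacyc : N.AcyclicOn Tp)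
    (M : P → ℕ) (hM : ∀ p, M p ≠ 0 → p ∈ Sp)
    (H : Tr →₀ ℕ) (hH : ↑H.support ⊆ Tp)
    (MH : P → ℕ) (hMH : ∀ p, (MH p : ℤ) = (M p : ℤ) + N.tokN H p) :
    (∀ s, N.FaithfulPlace Tp Sp s →
      ∀ p, (MH s : ℕ∞) * N.faithOrig Tp Sp (Sum.inl s) p ≤ (M p : ℕ∞)) ∧
    ∀ (k : ℕ) (t : Tr), t ∈ N.trans → (∀ p, k * N.pre t p ≤ MH p) →
      ∀ p, (k : ℕ∞) * N.faithOrig Tp Sp (Sum.inr t) p ≤ (M p : ℕ∞) :=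
  faithful_origins_general N Tp Sp hacyc M hM H hH MH hMH
end
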